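/- arXiv:2409.15597 — 2 statements merged into one kernel-verified Lean document; each statement's English description precedes it below -/
import Mathlib

section
/- Fix σ > 0. For every sequence of parameter pairs (μ_m, 𝒯_m) with μ_m → ∞, 𝒯_m → ∞ and √(log 𝒯_m)/μ_m → 0: in the change-point model with change after time τ (X_1,…,X_τ i.i.d. N(0,1), X_{τ+1},…,X_{𝒯_m} i.i.d. N(μ_m, σ²), all independent), the supremum over integers 1 ≤ τ < t ≤ 𝒯_m of P(Y_t^GLR ≠ max_{τ≤k<t} W_{t,k}) tends to 0 as m → ∞. -/
open MeasureTheory ProbabilityTheory Filter Real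

noncomputable section

/-- Partial sums of a path: `pS X 0 = 0`, `pS X t = X 1 + ⋯ + X t`. -/
def pS (X : ℕ → ℝ) (t : ℕ) : ℝ := ∑ i ∈ Finset.Icc 1 t, X i

/-- GLR quantity `W_{t,k} = |S_t − S_k|/√(t−k)`. -/
def glrW (X : ℕ → ℝ) (t k : ℕ) : ℝ := |pS X t - pS X k| / Real.sqrt ((t : ℝ) - (k : ℝ))

/-- GLR statistic `Y_t^GLR = max_{0 ≤ k < t} W_{t,k}`. -/
def Yglr (X : ℕ → ℝ) (t : ℕ) : ℝ := ⨆ k : Fin t, glrW X t (k : ℕ)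

/-!
Split `S_t - S_k = (S_t - S_τ) + (S_τ - S_k)` for `k < τ < t`. If the post-change increment is
large, `S_t - S_τ ≥ (t - τ) μ / 2`, and every pre-change increment is small,
`|S_τ - S_k| ≤ μ √(τ - k) / 8`, then `W_{t,k} ≤ W_{t,τ}` for all `k < τ`, so the GLR maximum is
attained at some `k ≥ τ`. Both increments are sums of independent Gaussians, so Chernoff bounds
give a failure probability of at most `exp (-μ² / (8σ²)) + 2τ exp (-μ² / 128)`; since
`log 𝒯 = o(μ²)`, the factor `τ ≤ 𝒯` is absorbed by `exp (-μ² / 128)`.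
-/

open scoped NNReal Topology
open Finset

/-- With `a = √(t - τ)`, `b = √(τ - k)`, `c = √(t - k)`, `A = S_t - S_τ`, `N = S_τ - S_k`,
this is `W_{t,k} ≤ W_{t,τ}`. -/
lemma abs_add_mul_le_mul_of_sq_eq_sq_add_sq {A N a b c μ : ℝ} (ha : 1 ≤ a) (hb : 1 ≤ b)
    (hc : c ^ 2 = a ^ 2 + b ^ 2) (hc0 : 0 ≤ c) (hA : a ^ 2 * μ / 2 ≤ A) (hN : |N| ≤ μ * b / 8) :
    |A + N| * a ≤ A * c := by
  have hμ : 0 ≤ μ := by nlinarith [abs_nonneg N]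
  have hA0 : 0 ≤ A := by nlinarith
  have hac : a ≤ c := by nlinarith
  have hcab : c ≤ a + b := by nlinarith
  have hN_le : |N| * a * (c + a) ≤ A * (c - a) * (c + a) := by
    have hdiff : (c - a) * (c + a) = b ^ 2 := by nlinarith
    have h2ab : 2 * a + b ≤ 3 * a * b := by nlinarith
    calc |N| * a * (c + a) ≤ μ * b / 8 * a * (2 * a + b) := by gcongr ?_ * a * ?_; linarith
      _ ≤ μ * b / 8 * a * (3 * a * b) := by gcongr
      _ ≤ A * b ^ 2 := by nlinarith
      _ = A * (c - a) * (c + a) := by rw [mul_assoc, hdiff]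
  have hN_le' : |N| * a ≤ A * (c - a) := le_of_mul_le_mul_right hN_le (by linarith)
  calc |A + N| * a ≤ (A + |N|) * a := by
        gcongr
        exact (abs_add_le _ _).trans_eq (by rw [abs_of_nonneg hA0])
    _ ≤ A * c := by linarith

lemma pS_sub_pS (x : ℕ → ℝ) {k t : ℕ} (h : k ≤ t) :
    pS x t - pS x k = ∑ i ∈ Ioc k t, x i := by
  have hIoc : ∀ u, pS x u = ∑ i ∈ Ioc 0 u, x i := fun u => by
    rw [pS, ← Finset.Icc_add_one_left_eq_Ioc, zero_add]
  rw [hIoc, hIoc, sub_eq_iff_eq_add', Finset.sum_Ioc_consecutive _ k.zero_le h]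

lemma glrW_le_glrW_of_drift (x : ℕ → ℝ) {k τ t : ℕ} {μ : ℝ} (hkτ : k < τ) (hτt : τ < t)
    (hA : ((t : ℝ) - τ) * μ / 2 ≤ pS x t - pS x τ)
    (hN : |pS x τ - pS x k| ≤ μ * √((τ : ℝ) - k) / 8) :
    glrW x t k ≤ glrW x t τ := by
  have he : (1 : ℝ) ≤ (t : ℝ) - τ := by
    have : (τ : ℝ) + 1 ≤ t := by exact_mod_cast hτt
    linarith
  have hd : (1 : ℝ) ≤ (τ : ℝ) - k := by
    have : (k : ℝ) + 1 ≤ τ := by exact_mod_cast hkτ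
    linarith
  have hsplit : pS x t - pS x k = (pS x t - pS x τ) + (pS x τ - pS x k) := by ring
  have htk : (t : ℝ) - k = ((t : ℝ) - τ) + ((τ : ℝ) - k) := by ring
  have hμ : 0 ≤ μ := by
    have hsd : 0 < √((τ : ℝ) - k) := sqrt_pos.2 (by linarith)
    nlinarith [abs_nonneg (pS x τ - pS x k)]
  have hA0 : 0 ≤ pS x t - pS x τ := by nlinarith
  rw [glrW, glrW, hsplit, abs_of_nonneg hA0,
    div_le_div_iff₀ (sqrt_pos.2 (by linarith)) (sqrt_pos.2 (by linarith))]
  exact abs_add_mul_le_mul_of_sq_eq_sq_add_sq (one_le_sqrt.2 he) (one_le_sqrt.2 hd)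
    (by rw [sq_sqrt, sq_sqrt, sq_sqrt, htk] <;> linarith) (sqrt_nonneg _)
    (by rwa [sq_sqrt (by linarith)]) hN

lemma Yglr_eq_iSup_Ico (x : ℕ → ℝ) {τ t : ℕ} (hτt : τ < t)
    (h : ∀ k < τ, glrW x t k ≤ glrW x t τ) :
    Yglr x t = ⨆ k : (Ico τ t : Finset ℕ), glrW x t k := by
  have hτ : τ ∈ Ico τ t := mem_Ico.2 ⟨le_rfl, hτt⟩
  have : Nonempty (Fin t) := ⟨⟨τ, hτt⟩⟩
  have : Nonempty (Ico τ t : Finset ℕ) := ⟨⟨τ, hτ⟩⟩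
  have hbdd : BddAbove (Set.range fun k : (Ico τ t : Finset ℕ) => glrW x t k) :=
    (Set.finite_range _).bddAbove
  apply le_antisymm
  · refine ciSup_le fun k => ?_
    rcases lt_or_ge (k : ℕ) τ with hk | hk
    · exact (h k hk).trans (le_ciSup hbdd ⟨τ, hτ⟩)
    · exact le_ciSup hbdd ⟨k, mem_Ico.2 ⟨hk, k.2⟩⟩
  · refine ciSup_le fun k => ?_
    exact le_ciSup (f := fun k : Fin t => glrW x t k) (Set.finite_range _).bddAbove
      ⟨k, (mem_Ico.1 k.2).2⟩

section Gaussian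

variable {Ω : Type*} [MeasurableSpace Ω] {P : Measure Ω}

lemma hasSubgaussianMGF_id_gaussianReal (v : ℝ≥0) : HasSubgaussianMGF id v (gaussianReal 0 v) where
  integrable_exp_mul := integrable_exp_mul_gaussianReal
  mgf_le t := by simp [mgf_id_gaussianReal]

lemma hasSubgaussianMGF_sub_of_map_eq_gaussianReal {X : Ω → ℝ} {m : ℝ} {v : ℝ≥0}
    (hX : P.map X = gaussianReal m v) : HasSubgaussianMGF (fun ω => X ω - m) v P := by
  have hXm : AEMeasurable X P := aemeasurable_of_map_neZero (by rw [hX]; infer_instance)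
  have hmap : P.map (fun ω => X ω - m) = gaussianReal 0 v := by
    change P.map ((fun y => y - m) ∘ X) = _
    rw [← AEMeasurable.map_map_of_aemeasurable (by fun_prop) hXm, hX, gaussianReal_map_sub_const,
      sub_self]
  rw [← HasSubgaussianMGF.id_map_iff (by fun_prop), hmap]
  exact hasSubgaussianMGF_id_gaussianReal v

lemma hasSubgaussianMGF_sum_sub_of_iIndepFun {ι : Type*} {X : ι → Ω → ℝ} {s : Finset ι}
    {m : ℝ} {v : ℝ≥0} (hind : iIndepFun (fun i : s => X i) P)
    (hlaw : ∀ i ∈ s, P.map (X i) = gaussianReal m v) :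
    HasSubgaussianMGF (fun ω => ∑ i ∈ s, X i ω - #s * m) (#s * v) P := by
  have hind' : iIndepFun (fun (i : s) ω => X i ω - m) P :=
    hind.comp (fun _ y => y - m) fun _ => by fun_prop
  have := HasSubgaussianMGF.sum_of_iIndepFun hind' (s := univ) (c := fun _ => v)
    fun i _ => hasSubgaussianMGF_sub_of_map_eq_gaussianReal (hlaw i i.2)
  simp only [sum_const, card_univ, Fintype.card_coe, nsmul_eq_mul] at this
  refine this.congr (ae_of_all _ fun ω => ?_)
  simp only [sum_sub_distrib, sum_const, card_univ, Fintype.card_coe, nsmul_eq_mul]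
  rw [sum_coe_sort s (fun i => X i ω)]

lemma ProbabilityTheory.HasSubgaussianMGF.measureReal_abs_ge_le [IsFiniteMeasure P]
    {X : Ω → ℝ} {c : ℝ≥0} (h : HasSubgaussianMGF X c P) {ε : ℝ} (hε : 0 ≤ ε) :
    P.real {ω | ε ≤ |X ω|} ≤ 2 * exp (-ε ^ 2 / (2 * c)) := by
  have hsub : {ω | ε ≤ |X ω|} ⊆ {ω | ε ≤ X ω} ∪ {ω | ε ≤ (-X) ω} := fun ω hω => by
    simpa only [Set.mem_union, Set.mem_ofPred_eq, Pi.neg_apply, le_abs] using hω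
  calc P.real {ω | ε ≤ |X ω|}
        ≤ P.real ({ω | ε ≤ X ω} ∪ {ω | ε ≤ (-X) ω}) := measureReal_mono hsub
    _ ≤ P.real {ω | ε ≤ X ω} + P.real {ω | ε ≤ (-X) ω} := measureReal_union_le _ _
    _ ≤ 2 * exp (-ε ^ 2 / (2 * c)) := by
      linarith [h.measure_ge_le hε, h.neg.measure_ge_le hε]

variable {ι : Type*} {X : ι → Ω → ℝ} {s : Finset ι}

lemma measureReal_sum_le_half_le (hs : s.Nonempty) {μ σ : ℝ} (hμ : 0 ≤ μ) (hσ : σ ≠ 0)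
    (hind : iIndepFun (fun i : s => X i) P)
    (hlaw : ∀ i ∈ s, P.map (X i) = gaussianReal μ (σ ^ 2).toNNReal) :
    P.real {ω | ∑ i ∈ s, X i ω ≤ #s * μ / 2} ≤ exp (-(μ ^ 2 / (8 * σ ^ 2))) := by
  have hn : (1 : ℝ) ≤ #s := by exact_mod_cast hs.card_pos
  have h := (hasSubgaussianMGF_sum_sub_of_iIndepFun hind hlaw).neg.measure_ge_le
    (ε := #s * μ / 2) (by positivity)
  have hset : {ω | ∑ i ∈ s, X i ω ≤ #s * μ / 2}
      = {ω | #s * μ / 2 ≤ (-fun ω => ∑ i ∈ s, X i ω - #s * μ) ω} := by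
    ext ω
    simp only [Set.mem_ofPred_eq, Pi.neg_apply]
    constructor <;> intro h <;> linarith
  rw [hset]
  refine h.trans (exp_le_exp.2 ?_)
  push_cast
  rw [coe_toNNReal _ (sq_nonneg σ), neg_div, neg_le_neg_iff,
    div_le_div_iff₀ (by positivity) (by positivity)]
  nlinarith [mul_nonneg (mul_nonneg (mul_nonneg (sq_nonneg μ) (sq_nonneg σ))
    (sub_nonneg.2 hn)) (zero_le_one.trans hn)]

lemma measureReal_abs_sum_ge_le (hs : s.Nonempty) {c : ℝ} (hc : 0 ≤ c)
    (hind : iIndepFun (fun i : s => X i) P)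
    (hlaw : ∀ i ∈ s, P.map (X i) = gaussianReal 0 1) :
    P.real {ω | c * √(#s : ℝ) ≤ |∑ i ∈ s, X i ω|} ≤ 2 * exp (-(c ^ 2 / 2)) := by
  have hn : (0 : ℝ) < #s := by exact_mod_cast hs.card_pos
  have : IsProbabilityMeasure P := hind.isProbabilityMeasure
  have h := (hasSubgaussianMGF_sum_sub_of_iIndepFun hind hlaw).measureReal_abs_ge_le
    (ε := c * √(#s : ℝ)) (by positivity)
  simp only [mul_zero, sub_zero, NNReal.coe_natCast, mul_one] at h
  rwa [mul_pow, sq_sqrt hn.le, neg_div, mul_div_mul_right _ _ hn.ne'] at h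

end Gaussian

lemma iIndepFun_Ioc_of_le {Ω : Type*} [MeasurableSpace Ω] {P : Measure Ω} {X : ℕ → Ω → ℝ}
    {T a b : ℕ} (hb : b ≤ T) (hind : iIndepFun (fun i : Set.Icc 1 T => X i) P) :
    iIndepFun (fun i : (Ioc a b : Finset ℕ) => X i) P := by
  have hmem (i : (Ioc a b : Finset ℕ)) : (i : ℕ) ∈ Set.Icc 1 T := by
    obtain ⟨hai, hib⟩ := mem_Ioc.1 i.2
    exact ⟨by omega, hib.trans hb⟩
  exact hind.precomp (g := fun i => ⟨i, hmem i⟩) fun i j hij =>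
    Subtype.ext (Subtype.mk.inj hij)

lemma cast_card_Ioc {a b : ℕ} (h : a ≤ b) : (#(Ioc a b) : ℝ) = b - a := by
  rw [Nat.card_Ioc, Nat.cast_sub h]

theorem measureReal_Yglr_ne_iSup_Ico_le {Ω : Type*} [MeasurableSpace Ω] {P : Measure Ω}
    [IsProbabilityMeasure P] {X : ℕ → Ω → ℝ} {T τ t : ℕ} {μ σ : ℝ} (hμ : 0 ≤ μ) (hσ : σ ≠ 0)
    (hτt : τ < t) (ht : t ≤ T) (hind : iIndepFun (fun i : Set.Icc 1 T => X i) P)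
    (hpre : ∀ i, 1 ≤ i → i ≤ τ → P.map (X i) = gaussianReal 0 1)
    (hpost : ∀ i, τ < i → i ≤ T → P.map (X i) = gaussianReal μ (σ ^ 2).toNNReal) :
    P.real {ω | Yglr (fun i => X i ω) t ≠ ⨆ k : (Ico τ t : Finset ℕ), glrW (fun i => X i ω) t k}
      ≤ exp (-(μ ^ 2 / (8 * σ ^ 2))) + 2 * τ * exp (-(μ ^ 2 / 128)) := by
  set E := {ω | ∑ i ∈ Ioc τ t, X i ω ≤ #(Ioc τ t) * μ / 2}
  set F := fun k => {ω | μ / 8 * √(#(Ioc k τ) : ℝ) ≤ |∑ i ∈ Ioc k τ, X i ω|}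
  have hsub : {ω | Yglr (fun i => X i ω) t ≠ ⨆ k : (Ico τ t : Finset ℕ), glrW (fun i => X i ω) t k}
      ⊆ E ∪ ⋃ k ∈ range τ, F k := by
    intro ω hω
    by_contra hgood
    simp only [E, F, Set.mem_union, Set.mem_iUnion, Set.mem_ofPred_eq, mem_range, not_or,
      not_exists, not_le] at hgood
    refine hω (Yglr_eq_iSup_Ico _ hτt fun k hk => glrW_le_glrW_of_drift _ hk hτt (μ := μ) ?_ ?_)
    · rw [pS_sub_pS _ hτt.le, ← cast_card_Ioc hτt.le]
      exact hgood.1.le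
    · rw [pS_sub_pS _ hk.le, ← cast_card_Ioc hk.le, mul_div_right_comm]
      exact (hgood.2 k hk).le
  have hE : P.real E ≤ exp (-(μ ^ 2 / (8 * σ ^ 2))) :=
    measureReal_sum_le_half_le (nonempty_Ioc.2 hτt) hμ hσ (iIndepFun_Ioc_of_le ht hind)
      fun i hi => hpost i (mem_Ioc.1 hi).1 ((mem_Ioc.1 hi).2.trans ht)
  have hF : ∀ k ∈ range τ, P.real (F k) ≤ 2 * exp (-(μ ^ 2 / 128)) := fun k hk => by
    have hkτ := mem_range.1 hk
    convert measureReal_abs_sum_ge_le (nonempty_Ioc.2 hkτ) (by positivity : 0 ≤ μ / 8)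
      (iIndepFun_Ioc_of_le (hτt.trans_le ht).le hind)
      (fun i hi => hpre i (by linarith [(mem_Ioc.1 hi).1]) (mem_Ioc.1 hi).2) using 3
    ring
  calc _ ≤ P.real (E ∪ ⋃ k ∈ range τ, F k) := measureReal_mono hsub
    _ ≤ P.real E + ∑ k ∈ range τ, P.real (F k) :=
      (measureReal_union_le _ _).trans (add_le_add_right (measureReal_biUnion_finset_le _ _) _)
    _ ≤ exp (-(μ ^ 2 / (8 * σ ^ 2))) + ∑ k ∈ range τ, 2 * exp (-(μ ^ 2 / 128)) :=
      add_le_add hE (sum_le_sum hF)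
    _ = exp (-(μ ^ 2 / (8 * σ ^ 2))) + 2 * τ * exp (-(μ ^ 2 / 128)) := by
      rw [sum_const, card_range, nsmul_eq_mul]
      ring

lemma tendsto_exp_add_mul_exp_zero {α : Type*} {l : Filter α} {σ : ℝ} (hσ : σ ≠ 0)
    {μ : α → ℝ} {T : α → ℕ} (hμ : Tendsto μ l atTop)
    (hrate : Tendsto (fun m => √(log (T m)) / μ m) l (𝓝 0)) :
    Tendsto (fun m => exp (-(μ m ^ 2 / (8 * σ ^ 2))) + 2 * T m * exp (-(μ m ^ 2 / 128)))
      l (𝓝 0) := by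
  have hμ2 : Tendsto (fun m => μ m ^ 2) l atTop := (tendsto_pow_atTop two_ne_zero).comp hμ
  have hsignal : Tendsto (fun m => exp (-(μ m ^ 2 / (8 * σ ^ 2)))) l (𝓝 0) :=
    tendsto_exp_atBot.comp <| tendsto_neg_atTop_atBot.comp <|
      hμ2.atTop_div_const (by positivity)
  have hexponent : Tendsto (fun m => log (T m) - μ m ^ 2 / 128) l atBot := by
    have hratio := (hrate.pow 2).sub_const (1 / 128)
    rw [zero_pow two_ne_zero, zero_sub] at hratio
    refine (hμ2.atTop_mul_neg (by norm_num) hratio).congr' ?_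
    filter_upwards [hμ.eventually_ne_atTop 0] with m hm
    rw [div_pow, sq_sqrt (log_natCast_nonneg _)]
    field_simp
  have hnoise : Tendsto (fun m => 2 * T m * exp (-(μ m ^ 2 / 128))) l (𝓝 0) := by
    refine tendsto_of_tendsto_of_tendsto_of_le_of_le tendsto_const_nhds
      (by simpa using (tendsto_exp_atBot.comp hexponent).const_mul 2) (fun m => by positivity)
      fun m => ?_
    rw [mul_assoc, sub_eq_add_neg, exp_add]
    gcongr
    exact le_exp_log _
  simpa using hsignal.add hnoise

theorem statement11_general (σ : ℝ) (hσ : 0 < σ) (μs : ℕ → ℝ) (Ts : ℕ → ℕ)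
    (hμ : Tendsto μs atTop atTop)
    (hrate : Tendsto (fun m => Real.sqrt (Real.log (Ts m : ℝ)) / μs m) atTop (nhds 0)) :
    ∀ ε : ℝ, 0 < ε → ∃ M : ℕ, ∀ m : ℕ, M ≤ m →
      ∀ τ t : ℕ, 1 ≤ τ → τ < t → t ≤ Ts m →
      ∀ (Ω : Type) [MeasurableSpace Ω] (P : Measure Ω) [IsProbabilityMeasure P]
        (X : ℕ → Ω → ℝ), (∀ i, Measurable (X i)) →
      iIndepFun (fun i : ↥(Set.Icc 1 (Ts m)) => X (i : ℕ)) P →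
      (∀ i, 1 ≤ i → i ≤ τ → Measure.map (X i) P = gaussianReal 0 1) →
      (∀ i, τ < i → i ≤ Ts m → Measure.map (X i) P = gaussianReal (μs m) ((σ ^ 2).toNNReal)) →
      (P {ω | Yglr (fun i => X i ω) t ≠ ⨆ k : (Finset.Ico τ t : Finset ℕ), glrW (fun i => X i ω) t (k : ℕ)}).toReal ≤ ε := by
  intro ε hε
  obtain ⟨M, hM⟩ := eventually_atTop.1 <|
    ((tendsto_exp_add_mul_exp_zero hσ.ne' hμ hrate).eventually_lt_const hε).and
      (hμ.eventually_ge_atTop 0)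
  refine ⟨M, fun m hm τ t _ hτt ht Ω _ P _ X _ hind hpre hpost => ?_⟩
  obtain ⟨hbound, hμ0⟩ := hM m hm
  calc P.real _ ≤ exp (-(μs m ^ 2 / (8 * σ ^ 2))) + 2 * τ * exp (-(μs m ^ 2 / 128)) :=
        measureReal_Yglr_ne_iSup_Ico_le hμ0 hσ.ne' hτt ht hind hpre hpost
    _ ≤ exp (-(μs m ^ 2 / (8 * σ ^ 2))) + 2 * Ts m * exp (-(μs m ^ 2 / 128)) := by
        gcongr
        exact_mod_cast (hτt.trans_le ht).le
    _ ≤ ε := hbound.le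

/-- with μ_m → ∞, 𝒯_m → ∞, √(log 𝒯_m)/μ_m → 0, P(Y_t^GLR ≠ max_{τ≤k<t} W_{t,k}) tends to 0 uniformly in 1 ≤ τ < t ≤ 𝒯_m. -/
theorem statement11 (σ : ℝ) (hσ : 0 < σ) (μs : ℕ → ℝ) (Ts : ℕ → ℕ)
    (hμ : Tendsto μs atTop atTop) (hT : Tendsto Ts atTop atTop)
    (hrate : Tendsto (fun m => Real.sqrt (Real.log (Ts m : ℝ)) / μs m) atTop (nhds 0)) :
    ∀ ε : ℝ, 0 < ε → ∃ M : ℕ, ∀ m : ℕ, M ≤ m →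
      ∀ τ t : ℕ, 1 ≤ τ → τ < t → t ≤ Ts m →
      ∀ (Ω : Type) [MeasurableSpace Ω] (P : Measure Ω) [IsProbabilityMeasure P]
        (X : ℕ → Ω → ℝ), (∀ i, Measurable (X i)) →
      iIndepFun (fun i : ↥(Set.Icc 1 (Ts m)) => X (i : ℕ)) P →
      (∀ i, 1 ≤ i → i ≤ τ → Measure.map (X i) P = gaussianReal 0 1) →
      (∀ i, τ < i → i ≤ Ts m → Measure.map (X i) P = gaussianReal (μs m) ((σ ^ 2).toNNReal)) →
      (P {ω | Yglr (fun i => X i ω) t ≠ ⨆ k : (Finset.Ico τ t : Finset ℕ), glrW (fun i => X i ω) t (k : ℕ)}).toReal ≤ ε :=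
  statement11_general σ hσ μs Ts hμ hrate

end
end

section
/- Fix a drift parameter μ > 0 and define from reals X₁,…,X_t the CUSUM quantities V_{t,k} = (S_t − S_k − (μ/2)(t−k))·μ, where S_k = X₁+…+X_k (S₀ = 0). (i) Deterministically, for any integers 0 ≤ m ≤ t: max_{0≤k≤m} V_{m,k} − max_{0≤k≤t} V_{t,k} ≤ −V_{t,m}. (ii) If in addition X_{m+1},…,X_t are i.i.d. N(μ, σ²) with σ > 0 (independent of the, possibly arbitrary, random variables X₁,…,X_m), then P( max_{0≤k≤m} V_{m,k} > max_{0≤k≤t} V_{t,k} ) ≤ P(V_{t,m} < 0) = Φ(−μ√(t−m)/(2σ)), where Φ is the standard normal cumulative distribution function. -/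
/-
Since `V_{t,k} = V_{t,m} + V_{m,k}`, every `V_{m,k}` with `k ≤ m` is at most
`max_{k ≤ t} V_{t,k} - V_{t,m}`, which is (i). Hence the event in (ii) lies inside
`{V_{t,m} < 0}`, and for `μ > 0` that is the event `S_t - S_m < μ (t - m) / 2`; the increment
`S_t - S_m` is a sum of `t - m` independent `N(μ, σ²)` variables, so it is
`N((t - m) μ, (t - m) σ²)`, and standardizing gives `Φ(-μ √(t - m) / (2σ))`.
-/

open MeasureTheory ProbabilityTheory Filter Real

noncomputable section

/-- Standard normal CDF Φ. -/
def stdCDF (x : ℝ) : ℝ := ((gaussianReal 0 1) (Set.Iic x)).toReal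

/-- CUSUM quantity `V_{t,k}` with drift parameter μ. -/
def cusumV (μ : ℝ) (X : ℕ → ℝ) (t k : ℕ) : ℝ :=
  (pS X t - pS X k - μ / 2 * ((t : ℝ) - (k : ℝ))) * μ

open scoped NNReal

lemma pS_sub_pS_s19 (X : ℕ → ℝ) {m t : ℕ} (hmt : m ≤ t) :
    pS X t - pS X m = ∑ i ∈ Finset.Ioc m t, X i := by
  have hIcc : ∀ u : ℕ, Finset.Icc 1 u = Finset.Ioc 0 u := Finset.Icc_add_one_left_eq_Ioc 0
  rw [pS, pS, hIcc, hIcc, ← Finset.sum_Ioc_consecutive _ (Nat.zero_le m) hmt, add_sub_cancel_left]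

lemma cusumV_add (μ : ℝ) (X : ℕ → ℝ) (t m k : ℕ) :
    cusumV μ X t k = cusumV μ X t m + cusumV μ X m k := by
  unfold cusumV; ring

lemma ciSup_cusumV_sub_ciSup_cusumV_le (μ : ℝ) (X : ℕ → ℝ) {m t : ℕ} (hmt : m ≤ t) :
    (⨆ k : Fin (m + 1), cusumV μ X m k) - (⨆ k : Fin (t + 1), cusumV μ X t k) ≤
      -cusumV μ X t m := by
  rw [sub_le_iff_le_add]
  apply ciSup_le
  intro k
  have hsplit := cusumV_add μ X t m k
  have hle := le_ciSup (f := fun k : Fin (t + 1) => cusumV μ X t k)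
    (Set.finite_range _).bddAbove ⟨k, by omega⟩
  dsimp only at hle
  linarith

lemma cusumV_neg_iff {μ : ℝ} (hμ : 0 < μ) (X : ℕ → ℝ) (t m : ℕ) :
    cusumV μ X t m < 0 ↔ pS X t - pS X m < μ / 2 * ((t : ℝ) - m) := by
  rw [cusumV, mul_neg_iff]
  simp [hμ, hμ.not_gt]

lemma map_sum_eq_gaussianReal {Ω ι : Type*} [MeasurableSpace Ω] {P : Measure Ω}
    [IsProbabilityMeasure P] {X : ι → Ω → ℝ} (hX : ∀ i, Measurable (X i)) (h : iIndepFun X P)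
    {m : ℝ} {v : ℝ≥0} (hlaw : ∀ i, P.map (X i) = gaussianReal m v) (s : Finset ι) :
    P.map (∑ i ∈ s, X i) = gaussianReal (s.card * m) (s.card * v) := by
  induction s using Finset.cons_induction with
  | empty =>
    rw [Finset.sum_empty, show (0 : Ω → ℝ) = fun _ => 0 from rfl, Measure.map_const]
    simp [gaussianReal_zero_var]
  | cons i s hi ih =>
    rw [Finset.sum_cons, gaussianReal_add_gaussianReal_of_indepFun
      (h.indepFun_finsetSum_of_notMem hX hi).symm (hlaw i) ih, Finset.card_cons]
    congr 1 <;> push_cast <;> ring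

lemma toReal_gaussianReal_Iio_eq_stdCDF (m : ℝ) {v : ℝ≥0} (hv : v ≠ 0) (c : ℝ) :
    (gaussianReal m v (Set.Iio c)).toReal = stdCDF ((c - m) / √v) := by
  have := nullSingletonClass_gaussianReal (μ := m) hv
  have hsd : 0 < √(v : ℝ) := Real.sqrt_pos.mpr (by positivity)
  have hstd : (gaussianReal 0 1).map (fun x => √(v : ℝ) * x + m) = gaussianReal m v := by
    rw [show (fun x => √(v : ℝ) * x + m) = (· + m) ∘ (√(v : ℝ) * ·) from rfl,
      ← Measure.map_map (by fun_prop) (by fun_prop), gaussianReal_map_const_mul,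
      gaussianReal_map_add_const]
    congr
    · simp
    · ext; simp [Real.sq_sqrt v.coe_nonneg]
  rw [measure_congr Iio_ae_eq_Iic, ← hstd, Measure.map_apply (by fun_prop) measurableSet_Iic,
    stdCDF]
  congr 3
  ext x
  simp only [Set.mem_preimage, Set.mem_Iic, le_div_iff₀ hsd]
  constructor <;> intro h <;> linarith

lemma map_pS_sub_pS_eq_gaussianReal {Ω : Type*} [MeasurableSpace Ω] {P : Measure Ω}
    [IsProbabilityMeasure P] {X : ℕ → Ω → ℝ} (hX : ∀ i, Measurable (X i)) {m t : ℕ}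
    (hmt : m ≤ t) (hind : iIndepFun (fun i : Set.Ioc m t => X i) P) {a : ℝ} {v : ℝ≥0}
    (hlaw : ∀ i, m < i → i ≤ t → P.map (X i) = gaussianReal a v) :
    P.map (fun ω => pS (X · ω) t - pS (X · ω) m) =
      gaussianReal ((t - m : ℕ) * a) ((t - m : ℕ) * v) := by
  have hsum := map_sum_eq_gaussianReal (fun i => hX _) hind (fun i => hlaw i i.2.1 i.2.2)
    Finset.univ
  rw [Finset.card_univ, ← Set.toFinset_card, Set.toFinset_Ioc, Nat.card_Ioc] at hsum
  convert hsum using 2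
  ext ω
  rw [pS_sub_pS_s19 _ hmt, Finset.sum_apply, ← Set.toFinset_Ioc]
  exact (Finset.sum_set_coe (f := (X · ω)) (Set.Ioc m t)).symm

lemma toReal_measure_cusumV_neg_eq_stdCDF {Ω : Type*} [MeasurableSpace Ω] {P : Measure Ω}
    {μ σ : ℝ} (hμ : 0 < μ) (hσ : 0 < σ) {X : ℕ → Ω → ℝ} (hX : ∀ i, Measurable (X i))
    {m t : ℕ} (hmt : m < t)
    (hlaw : P.map (fun ω => pS (X · ω) t - pS (X · ω) m) =
      gaussianReal ((t - m : ℕ) * μ) ((t - m : ℕ) * (σ ^ 2).toNNReal)) :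
    (P {ω | cusumV μ (X · ω) t m < 0}).toReal =
      stdCDF (-(μ * √((t : ℝ) - m)) / (2 * σ)) := by
  have hD : Measurable fun ω => pS (X · ω) t - pS (X · ω) m := by
    unfold pS; fun_prop
  have hn : (0 : ℝ) < t - m := by rw [sub_pos]; exact_mod_cast hmt
  have hv : ((t - m : ℕ) : ℝ≥0) * (σ ^ 2).toNNReal ≠ 0 := by
    refine mul_ne_zero (Nat.cast_ne_zero.mpr (by omega)) ?_
    simpa using hσ.ne'
  simp_rw [cusumV_neg_iff hμ]
  change (P ((fun ω => pS (X · ω) t - pS (X · ω) m) ⁻¹' Set.Iio (μ / 2 * ((t : ℝ) - m)))).toReal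
    = _
  rw [← Measure.map_apply hD measurableSet_Iio, hlaw, toReal_gaussianReal_Iio_eq_stdCDF _ hv]
  congr 1
  simp only [NNReal.coe_mul, NNReal.coe_natCast, Real.coe_toNNReal _ (sq_nonneg σ),
    Nat.cast_sub hmt.le]
  rw [Real.sqrt_mul hn.le, Real.sqrt_sq hσ.le, div_eq_div_iff (by positivity) (by positivity)]
  linear_combination (μ * σ) * Real.mul_self_sqrt hn.le

/-- (i) deterministically, for 0 ≤ m ≤ t,
max_{0≤k≤m} V_{m,k} − max_{0≤k≤t} V_{t,k} ≤ −V_{t,m}; (ii) if X_{m+1},…,X_t are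
i.i.d. N(μ,σ²), independent of the (possibly arbitrary) random variables X₁,…,X_m, then
P(max_{0≤k≤m} V_{m,k} > max_{0≤k≤t} V_{t,k}) ≤ P(V_{t,m} < 0) = Φ(−μ√(t−m)/(2σ)). -/
theorem statement19 (μ σ : ℝ) (hμ : 0 < μ) (hσ : 0 < σ) :
    (∀ (X : ℕ → ℝ) (m t : ℕ), m ≤ t →
      (⨆ k : Fin (m + 1), cusumV μ X m (k : ℕ)) - (⨆ k : Fin (t + 1), cusumV μ X t (k : ℕ)) ≤
        -cusumV μ X t m)
    ∧ (∀ (m t : ℕ), m < t →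
        ∀ (Ω : Type) [MeasurableSpace Ω] (P : Measure Ω) [IsProbabilityMeasure P]
          (X : ℕ → Ω → ℝ), (∀ i, Measurable (X i)) →
        iIndepFun (fun i : ↥(Set.Ioc m t) => X (i : ℕ)) P →
        IndepFun (fun ω (i : Fin m) => X ((i : ℕ) + 1) ω)
          (fun ω (i : ↥(Set.Ioc m t)) => X (i : ℕ) ω) P →
        (∀ i, m < i → i ≤ t → Measure.map (X i) P = gaussianReal μ ((σ ^ 2).toNNReal)) →
        (P {ω | (⨆ k : Fin (t + 1), cusumV μ (fun i => X i ω) t (k : ℕ)) <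
            ⨆ k : Fin (m + 1), cusumV μ (fun i => X i ω) m (k : ℕ)}).toReal ≤
          (P {ω | cusumV μ (fun i => X i ω) t m < 0}).toReal
        ∧ (P {ω | cusumV μ (fun i => X i ω) t m < 0}).toReal =
            stdCDF (-(μ * Real.sqrt ((t : ℝ) - (m : ℝ))) / (2 * σ))) := by
  refine ⟨fun X m t hmt => ciSup_cusumV_sub_ciSup_cusumV_le μ X hmt, ?_⟩
  intro m t hmt Ω _ P _ X hX hindep _ hlaw
  refine ⟨?_, toReal_measure_cusumV_neg_eq_stdCDF hμ hσ hX hmt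
    (map_pS_sub_pS_eq_gaussianReal hX hmt.le hindep hlaw)⟩
  refine ENNReal.toReal_mono (measure_ne_top P _) (measure_mono fun ω hω => ?_)
  have := ciSup_cusumV_sub_ciSup_cusumV_le μ (X · ω) hmt.le
  simp only [Set.mem_ofPred_eq] at hω ⊢
  linarith

end
end
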